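/- Let F be a (λ,ω)-elliptic operator on C(V), σ ∈ C(V) with ⟨σ,ω⟩ = 0, λ = 0, and G the orthogonal Green operator of F. Then 1 + ⟨G(σ),σ⟩ > 0, and the operator H_σ = F + P_σ is a singular (0,ω)-elliptic operator (ω remains in its kernel). -/
import Mathlib


open Finset

noncomputable def ip {V : Type*} [Fintype V] (u v : V → ℝ) : ℝ := ∑ x, u x * v x

lemma ip_comm {V : Type*} [Fintype V] (u v : V → ℝ) : ip u v = ip v u := by
  simp [ip, mul_comm]

lemma ip_add_left {V : Type*} [Fintype V] (u v w : V → ℝ) :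
    ip (u + v) w = ip u w + ip v w := by
  simp [ip, add_mul, Finset.sum_add_distrib]

lemma ip_smul_left {V : Type*} [Fintype V] (a : ℝ) (u w : V → ℝ) :
    ip (a • u) w = a * ip u w := by
  simp [ip, Finset.mul_sum, mul_assoc]

/-- If `F` is `(0,ω)`-elliptic with orthogonal Green operator `G` and `⟨σ,ω⟩ = 0`, then
`1 + ⟨G(σ),σ⟩ > 0` and `H_σ = F + P_σ` is again a singular `(0,ω)`-elliptic operator. -/
theorem stmt15 {V : Type*} [Fintype V]
    (F : (V → ℝ) →ₗ[ℝ] (V → ℝ)) (ω σ : V → ℝ)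
    (G : (V → ℝ) → (V → ℝ))
    -- F is (0,ω)-elliptic
    (hsa : ∀ u v, ip (F u) v = ip u (F v))
    (hpsd : ∀ u, 0 ≤ ip (F u) u)
    (hunit : ip ω ω = 1)
    (heig : F ω = 0)
    (hsimple : ∀ u : V → ℝ, F u = 0 → ∃ a : ℝ, u = a • ω)
    -- G is the orthogonal Green operator of F
    (hGF : ∀ u, G (F u) = u - ip ω u • ω)
    (hFG : ∀ u, F (G u) = u - ip ω u • ω)
    (hGω : G ω = 0)
    (hGorth : ∀ u, ip (G u) ω = 0)
    -- σ orthogonal to ω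
    (hσω : ip σ ω = 0) :
    0 < 1 + ip (G σ) σ ∧
      (F ω + ip σ ω • σ = 0) ∧
      (∀ u v, ip (F u + ip σ u • σ) v = ip u (F v + ip σ v • σ)) ∧
      (∀ u, 0 ≤ ip (F u + ip σ u • σ) u) ∧
      (∀ u : V → ℝ, F u + ip σ u • σ = 0 → ∃ a : ℝ, u = a • ω) := by
  have ip_add_right : ∀ u v w : V → ℝ, ip u (v + w) = ip u v + ip u w := fun u v w => by
    rw [ip_comm, ip_add_left, ip_comm v u, ip_comm w u]
  have ip_smul_right : ∀ (a : ℝ) (u w : V → ℝ), ip u (a • w) = a * ip u w := fun a u w => by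
    rw [ip_comm, ip_smul_left, ip_comm w u]
  have hωσ : ip ω σ = 0 := by rw [ip_comm]; exact hσω
  have key : ip (G σ) σ = ip (F (G σ)) (G σ) := by
    rw [hsa, hFG, hωσ, sub_eq_add_neg, ip_add_right]
    simp [ip_smul_right, ip]
  refine ⟨?_, ?_, ?_, ?_, ?_⟩
  · have := hpsd (G σ)
    rw [← key] at this
    linarith
  · rw [heig, hσω]; simp
  · intro u v
    rw [ip_add_left, ip_smul_left, ip_add_right, ip_smul_right, hsa, ip_comm σ v, ip_comm σ u]
    ring
  · intro u
    rw [ip_add_left, ip_smul_left, ip_comm σ u]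
    nlinarith [hpsd u, sq_nonneg (ip u σ)]
  · intro u hu
    have h1 : ip (F u + ip σ u • σ) u = 0 := by rw [hu]; simp [ip]
    rw [ip_add_left, ip_smul_left, ip_comm σ u] at h1
    have h2 : ip u σ = 0 := by nlinarith [hpsd u, sq_nonneg (ip u σ)]
    have h3 : F u = 0 := by
      have := hu
      rw [ip_comm σ u, h2] at this
      simpa using this
    exact hsimple u h3
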